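/- arXiv:1904.12154 — 4 statements merged into one kernel-verified Lean document; each statement's English description precedes it below -/
import Mathlib

section
/- Let m ≥ 3. The full third-order estimator c₃⁽ᵃ⁾ = (m²/((m−1)(m−2))) · (1/m)∑ⱼ (Xⱼ − X̄)(Yⱼ − Ȳ)(Zⱼ − Z̄) is an unbiased estimator of the third multivariate cumulant: 𝔼[c₃⁽ᵃ⁾] = 𝔼[XYZ] − 𝔼[XY]𝔼[Z] − 𝔼[XZ]𝔼[Y] − 𝔼[YZ]𝔼[X] + 2𝔼[X]𝔼[Y]𝔼[Z]. -/
/-!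
The estimator is `m² / ((m - 1)(m - 2))` times the sample third central moment, which does not
change when each coordinate is shifted by a constant, and the cumulant is the third central moment
`κ = 𝔼[(X₀ - 𝔼X)(Y₀ - 𝔼Y)(Z₀ - 𝔼Z)]`; so one may assume the coordinates centred. Writing
`Xⱼ - X̄ = ∑ₖ wⱼₖ Xₖ` with `wⱼₖ = δⱼₖ - 1/m`, the expected sample moment is
`(1/m) ∑ wⱼₖ wⱼₗ wⱼₙ 𝔼[XₖYₗZₙ]`. Unless `k = l = n`, one index differs from the other two and its
centred factor is independent of the rest, so `𝔼[XₖYₗZₙ] = 0`; what is left is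
`(κ/m) ∑ⱼₖ wⱼₖ³ = κ (m - 1)(m - 2)/m²`.
-/

open MeasureTheory ProbabilityTheory Finset

section SampleMoments

variable {ι : Type*} [Fintype ι]

noncomputable def sampleMean (a : ι → ℝ) : ℝ := (Fintype.card ι : ℝ)⁻¹ * ∑ i, a i

noncomputable def sampleThirdCentralMoment (a b c : ι → ℝ) : ℝ :=
  sampleMean fun j => (a j - sampleMean a) * (b j - sampleMean b) * (c j - sampleMean c)

lemma sampleMean_sub_const [Nonempty ι] (a : ι → ℝ) (x : ℝ) :
    sampleMean (a · - x) = sampleMean a - x := by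
  have hcard : (Fintype.card ι : ℝ) ≠ 0 := Nat.cast_ne_zero.mpr Fintype.card_ne_zero
  rw [sampleMean, sampleMean, sum_sub_distrib, sum_const, card_univ, nsmul_eq_mul, mul_sub,
    inv_mul_cancel_left₀ hcard]

lemma sampleThirdCentralMoment_sub_const [Nonempty ι] (a b c : ι → ℝ) (x y z : ℝ) :
    sampleThirdCentralMoment (a · - x) (b · - y) (c · - z) = sampleThirdCentralMoment a b c := by
  simp only [sampleThirdCentralMoment, sampleMean_sub_const, sub_sub_sub_cancel_right]

variable [DecidableEq ι]

noncomputable def centeringWeight (j k : ι) : ℝ :=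
  (if j = k then 1 else 0) - (Fintype.card ι : ℝ)⁻¹

lemma sub_sampleMean_eq_sum_centeringWeight_mul (a : ι → ℝ) (j : ι) :
    a j - sampleMean a = ∑ k, centeringWeight j k * a k := by
  simp [sampleMean, centeringWeight, sub_mul, sum_sub_distrib, ite_mul, mul_sum]

lemma sampleThirdCentralMoment_eq_sum_centeringWeight (a b c : ι → ℝ) :
    sampleThirdCentralMoment a b c = (Fintype.card ι : ℝ)⁻¹ *
      ∑ j, ∑ k, ∑ l, ∑ n, centeringWeight j k * centeringWeight j l * centeringWeight j n
        * (a k * b l * c n) := by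
  rw [sampleThirdCentralMoment, sampleMean]
  congr 1
  refine sum_congr rfl fun j _ => ?_
  rw [sub_sampleMean_eq_sum_centeringWeight_mul, sub_sampleMean_eq_sum_centeringWeight_mul,
    sub_sampleMean_eq_sum_centeringWeight_mul, sum_mul_sum, sum_mul]
  refine sum_congr rfl fun k _ => ?_
  rw [sum_mul]
  refine sum_congr rfl fun l _ => ?_
  rw [mul_sum]
  exact sum_congr rfl fun n _ => by ring

lemma sum_sum_centeringWeight_pow_three :
    ∑ j : ι, ∑ k, centeringWeight j k ^ 3 =
      ((Fintype.card ι : ℝ) - 1) * ((Fintype.card ι : ℝ) - 2) / Fintype.card ι := by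
  rcases isEmpty_or_nonempty ι with hι | hι
  · simp
  have hcard : (Fintype.card ι : ℝ) ≠ 0 := Nat.cast_ne_zero.mpr Fintype.card_ne_zero
  have hpow (j k : ι) : centeringWeight j k ^ 3 =
      (if j = k then (1 - (Fintype.card ι : ℝ)⁻¹) ^ 3 - (-(Fintype.card ι : ℝ)⁻¹) ^ 3 else 0)
        + (-(Fintype.card ι : ℝ)⁻¹) ^ 3 := by
    unfold centeringWeight; split_ifs <;> ring
  simp only [hpow, sum_add_distrib, sum_ite_eq, mem_univ, if_true, sum_const, card_univ,
    nsmul_eq_mul]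
  field_simp
  ring

lemma sum_centeringWeight_mul_mul_mul_diagonal (κ : ℝ) :
    ∑ j : ι, ∑ k, ∑ l, ∑ n, centeringWeight j k * centeringWeight j l * centeringWeight j n
        * (if k = l ∧ l = n then κ else 0) =
      ((Fintype.card ι : ℝ) - 1) * ((Fintype.card ι : ℝ) - 2) / Fintype.card ι * κ := by
  simp only [ite_and, mul_ite, mul_zero, sum_ite_irrel, sum_const_zero, sum_ite_eq, mem_univ,
    if_true]
  rw [← sum_sum_centeringWeight_pow_three, sum_mul]
  exact sum_congr rfl fun j _ => by rw [sum_mul]; exact sum_congr rfl fun k _ => by ring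

end SampleMoments

section Integrals

variable {Ω : Type*} [MeasurableSpace Ω] {μ : Measure Ω}

lemma MeasureTheory.MemLp.integrable_mul_mul {f g h : Ω → ℝ} (hf : MemLp f 3 μ)
    (hg : MemLp g 3 μ) (hh : MemLp h 3 μ) : Integrable (fun ω => f ω * g ω * h ω) μ := by
  have hfg : MemLp (fun ω => f ω * g ω) (3 / 2) μ := hg.mul' hf (hpqr := ⟨by
    rw [ENNReal.inv_div (by simp) (by simp), ENNReal.div_eq_inv_mul, mul_two]⟩)
  rw [← memLp_one_iff_integrable]
  refine hh.mul' hfg (hpqr := ⟨?_⟩)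
  rw [ENNReal.inv_div (by simp) (by simp), inv_one, ENNReal.div_eq_inv_mul, ← mul_add_one,
    mul_comm]
  norm_num
  exact ENNReal.mul_inv_cancel (by simp) (by simp)

lemma integral_sub_mul_sub_mul_sub [IsProbabilityMeasure μ] {f g h : Ω → ℝ}
    (hf : MemLp f 3 μ) (hg : MemLp g 3 μ) (hh : MemLp h 3 μ) :
    ∫ ω, (f ω - ∫ ω, f ω ∂μ) * (g ω - ∫ ω, g ω ∂μ) * (h ω - ∫ ω, h ω ∂μ) ∂μ =
      (∫ ω, f ω * g ω * h ω ∂μ) - (∫ ω, f ω * g ω ∂μ) * (∫ ω, h ω ∂μ)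
        - (∫ ω, f ω * h ω ∂μ) * (∫ ω, g ω ∂μ) - (∫ ω, g ω * h ω ∂μ) * (∫ ω, f ω ∂μ)
        + 2 * (∫ ω, f ω ∂μ) * (∫ ω, g ω ∂μ) * (∫ ω, h ω ∂μ) := by
  have hf2 := hf.mono_exponent (p := 2) (by norm_num)
  have hg2 := hg.mono_exponent (p := 2) (by norm_num)
  have hh2 := hh.mono_exponent (p := 2) (by norm_num)
  have hfgh := hf.integrable_mul_mul hg hh
  have hfg : Integrable (fun ω => f ω * g ω) μ := hf2.integrable_mul hg2
  have hfh : Integrable (fun ω => f ω * h ω) μ := hf2.integrable_mul hh2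
  have hgh : Integrable (fun ω => g ω * h ω) μ := hg2.integrable_mul hh2
  have hf1 := hf.integrable (by norm_num)
  have hg1 := hg.integrable (by norm_num)
  have hh1 := hh.integrable (by norm_num)
  set a := ∫ ω, f ω ∂μ
  set b := ∫ ω, g ω ∂μ
  set c := ∫ ω, h ω ∂μ
  calc ∫ ω, (f ω - a) * (g ω - b) * (h ω - c) ∂μ
      = ∫ ω, f ω * g ω * h ω - c * (f ω * g ω) - b * (f ω * h ω) - a * (g ω * h ω)
          + b * c * f ω + a * c * g ω + a * b * h ω - a * b * c ∂μ :=
        integral_congr_ae (.of_forall fun ω => by ring)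
    _ = _ := by
      rw [integral_sub, integral_add, integral_add, integral_add, integral_sub, integral_sub,
        integral_sub]
      all_goals try fun_prop
      simp only [integral_const_mul, integral_const, probReal_univ, smul_eq_mul, one_mul]
      ring

variable {ι : Type*} [Fintype ι] [DecidableEq ι]

lemma integral_sampleThirdCentralMoment {a b c : ι → Ω → ℝ} {κ : ℝ}
    (hint : ∀ k l n, Integrable (fun ω => a k ω * b l ω * c n ω) μ)
    (hmom : ∀ k l n, ∫ ω, a k ω * b l ω * c n ω ∂μ = if k = l ∧ l = n then κ else 0) :
    ∫ ω, sampleThirdCentralMoment (a · ω) (b · ω) (c · ω) ∂μ =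
      ((Fintype.card ι : ℝ) - 1) * ((Fintype.card ι : ℝ) - 2) / (Fintype.card ι : ℝ) ^ 2 * κ := by
  simp_rw [sampleThirdCentralMoment_eq_sum_centeringWeight]
  simp (disch := fun_prop) only [integral_const_mul, integral_finsetSum, hmom]
  rw [sum_centeringWeight_mul_mul_mul_diagonal]
  ring

end Integrals

section IID

variable {Ω ι β : Type*} [MeasurableSpace Ω] [MeasurableSpace β] {μ : Measure Ω}
  {V : ι → Ω → β}

lemma integral_mul_eq_zero_of_iIndepFun (hV : iIndepFun V μ) (hmeas : ∀ i, Measurable (V i))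
    {i p q : ι} (hpi : p ≠ i) (hqi : q ≠ i) {f : β → ℝ} {g : β × β → ℝ}
    (hf : Measurable f) (hg : Measurable g) (hf0 : ∫ ω, f (V i ω) ∂μ = 0) :
    ∫ ω, f (V i ω) * g (V p ω, V q ω) ∂μ = 0 := by
  have hind : IndepFun (fun ω => f (V i ω)) (fun ω => g (V p ω, V q ω)) μ :=
    ((hV.indepFun_prodMk hmeas p q i hpi hqi).comp hg hf).symm
  rw [hind.integral_fun_mul_eq_mul_integral (hf.comp (hmeas i)).aestronglyMeasurable
    (hg.comp ((hmeas p).prodMk (hmeas q))).aestronglyMeasurable, hf0, zero_mul]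

lemma integral_mul_mul_of_iIndepFun_of_identDistrib [DecidableEq ι] (hV : iIndepFun V μ)
    (hmeas : ∀ i, Measurable (V i)) {i₀ : ι} (hident : ∀ i, IdentDistrib (V i) (V i₀) μ μ)
    {f g h : β → ℝ} (hf : Measurable f) (hg : Measurable g) (hh : Measurable h)
    (hf0 : ∫ ω, f (V i₀ ω) ∂μ = 0) (hg0 : ∫ ω, g (V i₀ ω) ∂μ = 0)
    (hh0 : ∫ ω, h (V i₀ ω) ∂μ = 0) (k l n : ι) :
    ∫ ω, f (V k ω) * g (V l ω) * h (V n ω) ∂μ =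
      if k = l ∧ l = n then ∫ ω, f (V i₀ ω) * g (V i₀ ω) * h (V i₀ ω) ∂μ else 0 := by
  have hmean {φ : β → ℝ} (hφ : Measurable φ) (h0 : ∫ ω, φ (V i₀ ω) ∂μ = 0) (i : ι) :
      ∫ ω, φ (V i ω) ∂μ = 0 :=
    ((hident i).comp hφ).integral_eq.trans h0
  split_ifs with hdiag
  · obtain ⟨rfl, rfl⟩ := hdiag
    exact ((hident k).comp ((hf.mul hg).mul hh)).integral_eq
  by_cases hk : l ≠ k ∧ n ≠ k
  · convert integral_mul_eq_zero_of_iIndepFun hV hmeas hk.1 hk.2 hf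
      (g := fun x => g x.1 * h x.2) (by fun_prop) (hmean hf hf0 k) using 3 with ω
    ring
  by_cases hkl : k = l
  · subst hkl
    have hn : k ≠ n := fun hkn => hdiag ⟨rfl, hkn⟩
    convert integral_mul_eq_zero_of_iIndepFun hV hmeas hn hn hh
      (g := fun x => f x.1 * g x.2) (by fun_prop) (hmean hh hh0 n) using 3 with ω
    ring
  · obtain rfl : k = n := by tauto
    convert integral_mul_eq_zero_of_iIndepFun hV hmeas hkl hkl hg
      (g := fun x => f x.1 * h x.2) (by fun_prop) (hmean hg hg0 l) using 3 with ω
    ring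

variable [Fintype ι] [DecidableEq ι] {i₀ : ι}

theorem integral_sampleThirdCentralMoment_of_iid_of_integral_eq_zero (hV : iIndepFun V μ)
    (hmeas : ∀ i, Measurable (V i)) (hident : ∀ i, IdentDistrib (V i) (V i₀) μ μ)
    {f g h : β → ℝ} (hf : Measurable f) (hg : Measurable g) (hh : Measurable h)
    (hf3 : MemLp (fun ω => f (V i₀ ω)) 3 μ) (hg3 : MemLp (fun ω => g (V i₀ ω)) 3 μ)
    (hh3 : MemLp (fun ω => h (V i₀ ω)) 3 μ)
    (hf0 : ∫ ω, f (V i₀ ω) ∂μ = 0) (hg0 : ∫ ω, g (V i₀ ω) ∂μ = 0)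
    (hh0 : ∫ ω, h (V i₀ ω) ∂μ = 0) :
    ∫ ω, sampleThirdCentralMoment (f <| V · ω) (g <| V · ω) (h <| V · ω) ∂μ =
      ((Fintype.card ι : ℝ) - 1) * ((Fintype.card ι : ℝ) - 2) / (Fintype.card ι : ℝ) ^ 2
        * ∫ ω, f (V i₀ ω) * g (V i₀ ω) * h (V i₀ ω) ∂μ := by
  have hLp {φ : β → ℝ} (hφ : Measurable φ) (h3 : MemLp (fun ω => φ (V i₀ ω)) 3 μ) (i : ι) :
      MemLp (fun ω => φ (V i ω)) 3 μ :=
    ((hident i).comp hφ).symm.memLp_snd h3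
  exact integral_sampleThirdCentralMoment
    (fun k l n => (hLp hf hf3 k).integrable_mul_mul (hLp hg hg3 l) (hLp hh hh3 n))
    (integral_mul_mul_of_iIndepFun_of_identDistrib hV hmeas hident hf hg hh hf0 hg0 hh0)

theorem integral_sampleThirdCentralMoment_of_iid [IsProbabilityMeasure μ] (hV : iIndepFun V μ)
    (hmeas : ∀ i, Measurable (V i)) (hident : ∀ i, IdentDistrib (V i) (V i₀) μ μ)
    {f g h : β → ℝ} (hf : Measurable f) (hg : Measurable g) (hh : Measurable h)
    (hf3 : MemLp (fun ω => f (V i₀ ω)) 3 μ) (hg3 : MemLp (fun ω => g (V i₀ ω)) 3 μ)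
    (hh3 : MemLp (fun ω => h (V i₀ ω)) 3 μ) :
    ∫ ω, sampleThirdCentralMoment (f <| V · ω) (g <| V · ω) (h <| V · ω) ∂μ =
      ((Fintype.card ι : ℝ) - 1) * ((Fintype.card ι : ℝ) - 2) / (Fintype.card ι : ℝ) ^ 2
        * ∫ ω, (f (V i₀ ω) - ∫ ω, f (V i₀ ω) ∂μ) * (g (V i₀ ω) - ∫ ω, g (V i₀ ω) ∂μ)
          * (h (V i₀ ω) - ∫ ω, h (V i₀ ω) ∂μ) ∂μ := by
  have : Nonempty ι := ⟨i₀⟩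
  have hmean_sub {F : Ω → ℝ} (hF : MemLp F 3 μ) : ∫ ω, F ω - ∫ ω', F ω' ∂μ ∂μ = 0 := by
    rw [integral_sub (hF.integrable (by norm_num)) (integrable_const _), integral_const]
    simp
  have hcentered := integral_sampleThirdCentralMoment_of_iid_of_integral_eq_zero
    hV hmeas hident (hf.sub_const _) (hg.sub_const _) (hh.sub_const _)
    (hf3.sub (memLp_const _)) (hg3.sub (memLp_const _)) (hh3.sub (memLp_const _))
    (hmean_sub hf3) (hmean_sub hg3) (hmean_sub hh3)
  simpa only [sampleThirdCentralMoment_sub_const] using hcentered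

end IID

theorem unbiased_c3_full {Ω : Type*} [MeasurableSpace Ω] (μ : Measure Ω) [IsProbabilityMeasure μ]
    (m : ℕ) (hm : 3 ≤ m)
    (X Y Z : Fin m → Ω → ℝ)
    (hXmeas : ∀ i, Measurable (X i))
    (hYmeas : ∀ i, Measurable (Y i))
    (hZmeas : ∀ i, Measurable (Z i))
    (hindep : iIndepFun (fun i ω => (X i ω, Y i ω, Z i ω)) μ)
    (hident : ∀ i, IdentDistrib (fun ω => (X i ω, Y i ω, Z i ω)) (fun ω => (X ⟨0, by omega⟩ ω, Y ⟨0, by omega⟩ ω, Z ⟨0, by omega⟩ ω)) μ μ)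
    (hX3 : MemLp (X ⟨0, by omega⟩) 3 μ)
    (hY3 : MemLp (Y ⟨0, by omega⟩) 3 μ)
    (hZ3 : MemLp (Z ⟨0, by omega⟩) 3 μ) :
    (∫ ω, ((m:ℝ)^2 / (((m:ℝ)-1) * ((m:ℝ)-2))) * ((m:ℝ)⁻¹ * ∑ j, (X j ω - ((m:ℝ)⁻¹ * ∑ i, X i ω)) * (Y j ω - ((m:ℝ)⁻¹ * ∑ i, Y i ω)) * (Z j ω - ((m:ℝ)⁻¹ * ∑ i, Z i ω))) ∂μ) =
      (∫ ω, X ⟨0, by omega⟩ ω * Y ⟨0, by omega⟩ ω * Z ⟨0, by omega⟩ ω ∂μ) - (∫ ω, X ⟨0, by omega⟩ ω * Y ⟨0, by omega⟩ ω ∂μ) * (∫ ω, Z ⟨0, by omega⟩ ω ∂μ) - (∫ ω, X ⟨0, by omega⟩ ω * Z ⟨0, by omega⟩ ω ∂μ) * (∫ ω, Y ⟨0, by omega⟩ ω ∂μ) - (∫ ω, Y ⟨0, by omega⟩ ω * Z ⟨0, by omega⟩ ω ∂μ) * (∫ ω, X ⟨0, by omega⟩ ω ∂μ) + 2 * (∫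 ω, X ⟨0, by omega⟩ ω ∂μ) * (∫ ω, Y ⟨0, by omega⟩ ω ∂μ) * (∫ ω, Z ⟨0, by omega⟩ ω ∂μ) := by
  have hest := integral_sampleThirdCentralMoment_of_iid hindep
    (fun i => (hXmeas i).prodMk ((hYmeas i).prodMk (hZmeas i))) hident
    measurable_fst measurable_snd.fst measurable_snd.snd hX3 hY3 hZ3
  simp only [sampleThirdCentralMoment, sampleMean, Fintype.card_fin] at hest
  rw [integral_const_mul, hest, integral_sub_mul_sub_mul_sub hX3 hY3 hZ3]
  have hm3 : (3 : ℝ) ≤ m := by exact_mod_cast hm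
  have hm1 : (m : ℝ) - 1 ≠ 0 := by linarith
  have hm2 : (m : ℝ) - 2 ≠ 0 := by linarith
  field_simp
end

section
/- Let m ≥ 2 and suppose 𝔼[X] = 0. Then the reduced estimator c₃⁽ᵉ⁾ = ((m+1)·\overline{XYZ} − m(\overline{XY}·Z̄ + \overline{XZ}·Ȳ))/(m−1) satisfies 𝔼[c₃⁽ᵉ⁾] = 𝔼[XYZ] − 𝔼[XY]𝔼[Z] − 𝔼[XZ]𝔼[Y], which under the hypothesis 𝔼[X]=0 equals the third multivariate cumulant C₃(x,y,z). -/
open MeasureTheory ProbabilityTheory Finset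

/-! Expanding products of sample means into double sums, independence factors the off-diagonal
terms: `𝔼[\overline{XY} · Z̄] = (𝔼[XYZ] + (m - 1) 𝔼[XY] 𝔼[Z]) / m`, likewise for
`\overline{XZ} · Ȳ`, and `𝔼[\overline{XYZ}] = 𝔼[XYZ]`. With the weights `m + 1` and `m` the
diagonal terms leave `(m - 1) 𝔼[XYZ]`, so the whole numerator carries the factor `m - 1`.
Hölder's inequality makes all the products of `L³` variables integrable. -/

instance ENNReal.holderTriple_three_three : ENNReal.HolderTriple 3 3 (3 / 2) :=
  ⟨by rw [ENNReal.inv_div (by simp) (by simp), ENNReal.div_eq_inv_mul, mul_two]⟩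

instance ENNReal.holderTriple_three_halves_three : ENNReal.HolderTriple (3 / 2) 3 1 :=
  ⟨by rw [ENNReal.inv_div (by simp) (by simp), ENNReal.div_eq_inv_mul, ← mul_add_one,
    two_add_one_eq_three, ENNReal.inv_mul_cancel (by simp) (by simp), inv_one]⟩

namespace MeasureTheory

variable {Ω : Type*} [MeasurableSpace Ω] {μ : Measure Ω} {f g h : Ω → ℝ}

lemma MemLp.integrable_mul_of_three [IsFiniteMeasure μ] (hf : MemLp f 3 μ) (hg : MemLp g 3 μ) :
    Integrable (f * g) μ :=
  (hg.mul hf : MemLp _ (3 / 2) μ).integrable <| by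
    rw [ENNReal.le_div_iff_mul_le (by simp) (by simp)]; norm_num

lemma MemLp.integrable_mul_mul_of_three (hf : MemLp f 3 μ) (hg : MemLp g 3 μ)
    (hh : MemLp h 3 μ) : Integrable (f * g * h) μ :=
  (hg.mul hf : MemLp _ (3 / 2) μ).integrable_mul hh

end MeasureTheory

lemma Fintype.sum_sum_ite_eq_card_mul_add {ι R : Type*} [Fintype ι] [DecidableEq ι] [CommRing R]
    (a c : R) : ∑ i : ι, ∑ j : ι, (if i = j then a else c) =
      Fintype.card ι * a + Fintype.card ι * (Fintype.card ι - 1) * c := by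
  have (i j : ι) : (if i = j then a else c) = c + if i = j then a - c else 0 := by
    split_ifs <;> ring
  simp only [this, sum_add_distrib, sum_ite_eq, sum_const, card_univ, nsmul_eq_mul]
  ring

namespace ProbabilityTheory

variable {Ω ι β : Type*} [MeasurableSpace Ω] {μ : Measure Ω} [MeasurableSpace β]
  {W : ι → Ω → β} {W₀ : Ω → β} {g h : β → ℝ}

section IdentDistrib

variable [Fintype ι] (hident : ∀ i, IdentDistrib (W i) W₀ μ μ) (hg : Measurable g)
  (hgi : Integrable (fun ω ↦ g (W₀ ω)) μ)
include hident hg hgi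

lemma integrable_sum_comp_of_identDistrib : Integrable (fun ω ↦ ∑ i, g (W i ω)) μ :=
  integrable_finsetSum _ fun i _ ↦ ((hident i).comp hg).integrable_iff.mpr hgi

lemma integral_sampleMean_comp_of_identDistrib [Nonempty ι] :
    ∫ ω, (Fintype.card ι : ℝ)⁻¹ * ∑ i, g (W i ω) ∂μ = ∫ ω, g (W₀ ω) ∂μ := by
  have hgW (i : ι) : IdentDistrib (fun ω ↦ g (W i ω)) (fun ω ↦ g (W₀ ω)) μ μ :=
    (hident i).comp hg
  rw [integral_const_mul, integral_finsetSum _ fun i _ ↦ (hgW i).integrable_iff.mpr hgi]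
  simp [(hgW _).integral_eq, Fintype.card_ne_zero]

end IdentDistrib

section iIndepFun

variable (hW : iIndepFun W μ) (hident : ∀ i, IdentDistrib (W i) W₀ μ μ)
  (hg : Measurable g) (hh : Measurable h)
include hW hident hg hh

lemma integrable_comp_mul_comp_of_iIndepFun (hgi : Integrable (fun ω ↦ g (W₀ ω)) μ)
    (hhi : Integrable (fun ω ↦ h (W₀ ω)) μ) (hghi : Integrable (fun ω ↦ g (W₀ ω) * h (W₀ ω)) μ)
    (i j : ι) : Integrable (fun ω ↦ g (W i ω) * h (W j ω)) μ := by
  obtain rfl | hij := eq_or_ne i j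
  · exact ((hident i).comp (hg.mul hh)).integrable_iff.mpr hghi
  · exact ((hW.indepFun hij).comp hg hh).integrable_mul
      (((hident i).comp hg).integrable_iff.mpr hgi) (((hident j).comp hh).integrable_iff.mpr hhi)

lemma integral_comp_mul_comp_of_iIndepFun [DecidableEq ι] (i j : ι) :
    ∫ ω, g (W i ω) * h (W j ω) ∂μ = if i = j then ∫ ω, g (W₀ ω) * h (W₀ ω) ∂μ
      else (∫ ω, g (W₀ ω) ∂μ) * ∫ ω, h (W₀ ω) ∂μ := by
  split_ifs with hij
  · subst hij
    exact ((hident i).comp (hg.mul hh)).integral_eq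
  · calc ∫ ω, g (W i ω) * h (W j ω) ∂μ = (∫ ω, g (W i ω) ∂μ) * ∫ ω, h (W j ω) ∂μ :=
          ((hW.indepFun hij).comp hg hh).integral_mul_eq_mul_integral
            (hg.comp_aemeasurable (hident i).aemeasurable_fst).aestronglyMeasurable
            (hh.comp_aemeasurable (hident j).aemeasurable_fst).aestronglyMeasurable
      _ = (∫ ω, g (W₀ ω) ∂μ) * ∫ ω, h (W₀ ω) ∂μ :=
          congr_arg₂ (· * ·) ((hident i).comp hg).integral_eq ((hident j).comp hh).integral_eq

variable [Fintype ι] (hgi : Integrable (fun ω ↦ g (W₀ ω)) μ)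
    (hhi : Integrable (fun ω ↦ h (W₀ ω)) μ) (hghi : Integrable (fun ω ↦ g (W₀ ω) * h (W₀ ω)) μ)
include hgi hhi hghi

lemma integrable_sampleMean_mul_sampleMean : Integrable (fun ω ↦
      ((Fintype.card ι : ℝ)⁻¹ * ∑ i, g (W i ω)) * ((Fintype.card ι : ℝ)⁻¹ * ∑ j, h (W j ω))) μ := by
  simp only [mul_mul_mul_comm _ (∑ i, g (W i _)), sum_mul_sum]
  exact (integrable_finsetSum _ fun i _ ↦ integrable_finsetSum _ fun j _ ↦
    integrable_comp_mul_comp_of_iIndepFun hW hident hg hh hgi hhi hghi i j).const_mul _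

lemma integral_sum_comp_mul_sum_comp :
    ∫ ω, (∑ i, g (W i ω)) * ∑ j, h (W j ω) ∂μ = Fintype.card ι * ∫ ω, g (W₀ ω) * h (W₀ ω) ∂μ
      + Fintype.card ι * (Fintype.card ι - 1) * ((∫ ω, g (W₀ ω) ∂μ) * ∫ ω, h (W₀ ω) ∂μ) := by
  classical
  have hint (i j : ι) := integrable_comp_mul_comp_of_iIndepFun hW hident hg hh hgi hhi hghi i j
  simp only [sum_mul_sum]
  rw [integral_finsetSum _ fun i _ ↦ integrable_finsetSum _ fun j _ ↦ hint i j]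
  simp only [integral_finsetSum _ fun j _ ↦ hint _ j,
    integral_comp_mul_comp_of_iIndepFun hW hident hg hh]
  exact Fintype.sum_sum_ite_eq_card_mul_add _ _

lemma integral_sampleMean_mul_sampleMean [Nonempty ι] :
    ∫ ω, ((Fintype.card ι : ℝ)⁻¹ * ∑ i, g (W i ω)) * ((Fintype.card ι : ℝ)⁻¹ * ∑ j, h (W j ω)) ∂μ
      = (Fintype.card ι : ℝ)⁻¹ * ((∫ ω, g (W₀ ω) * h (W₀ ω) ∂μ)
        + (Fintype.card ι - 1) * ((∫ ω, g (W₀ ω) ∂μ) * ∫ ω, h (W₀ ω) ∂μ)) := by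
  have hn : (Fintype.card ι : ℝ) ≠ 0 := Nat.cast_ne_zero.mpr Fintype.card_ne_zero
  simp only [mul_mul_mul_comm _ (∑ i, g (W i _))]
  rw [integral_const_mul, integral_sum_comp_mul_sum_comp hW hident hg hh hgi hhi hghi]
  field_simp

end iIndepFun

end ProbabilityTheory

theorem unbiased_c3_e {Ω : Type*} [MeasurableSpace Ω] (μ : Measure Ω) [IsProbabilityMeasure μ]
    (m : ℕ) (hm : 2 ≤ m)
    (X Y Z : Fin m → Ω → ℝ)
    (hindep : iIndepFun (fun i ω => (X i ω, Y i ω, Z i ω)) μ)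
    (hident : ∀ i, IdentDistrib (fun ω => (X i ω, Y i ω, Z i ω)) (fun ω => (X ⟨0, by omega⟩ ω, Y ⟨0, by omega⟩ ω, Z ⟨0, by omega⟩ ω)) μ μ)
    (hX3 : MemLp (X ⟨0, by omega⟩) 3 μ)
    (hY3 : MemLp (Y ⟨0, by omega⟩) 3 μ)
    (hZ3 : MemLp (Z ⟨0, by omega⟩) 3 μ)
    (hEX : (∫ ω, X ⟨0, by omega⟩ ω ∂μ) = 0) :
    (∫ ω, (((m:ℝ)+1) * ((m:ℝ)⁻¹ * ∑ i, X i ω * Y i ω * Z i ω) - (m:ℝ) * (((m:ℝ)⁻¹ * ∑ i, X i ω * Y i ω) * ((m:ℝ)⁻¹ * ∑ i, Z i ω) + ((m:ℝ)⁻¹ * ∑ i, X i ω * Z i ω) * ((m:ℝ)⁻¹ * ∑ i, Y i ω))) / ((m:ℝ)-1) ∂μ) = (∫ ω, X ⟨0, by omega⟩ ω * Y ⟨0, by omega⟩ ω * Z ⟨0, by omega⟩ ω ∂μ) - (∫ ω, X ⟨0, by omega⟩ ω * Y ⟨0, by omega⟩ ω ∂μ) * (∫ ω, Z ⟨0, by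 omega⟩ ω ∂μ) - (∫ ω, X ⟨0, by omega⟩ ω * Z ⟨0, by omega⟩ ω ∂μ) * (∫ ω, Y ⟨0, by omega⟩ ω ∂μ) ∧
    (∫ ω, X ⟨0, by omega⟩ ω * Y ⟨0, by omega⟩ ω * Z ⟨0, by omega⟩ ω ∂μ) - (∫ ω, X ⟨0, by omega⟩ ω * Y ⟨0, by omega⟩ ω ∂μ) * (∫ ω, Z ⟨0, by omega⟩ ω ∂μ) - (∫ ω, X ⟨0, by omega⟩ ω * Z ⟨0, by omega⟩ ω ∂μ) * (∫ ω, Y ⟨0, by omega⟩ ω ∂μ) = (∫ ω, X ⟨0, by omega⟩ ω * Y ⟨0, by omega⟩ ω * Z ⟨0, by omega⟩ ω ∂μ) - (∫ ω, X ⟨0, by omega⟩ ω * Y ⟨0, by omega⟩ ω ∂μ) * (∫ ω, Z ⟨0, by omega⟩ ω ∂μ) - (∫ ω, X ⟨0, by omega⟩ ω * Z ⟨0, by omega⟩ ω ∂μ) * (∫ ω, Y ⟨0, by omega⟩ ω ∂μ) - (∫ ω, Y ⟨0, by omega⟩ ω * Z ⟨0, by omega⟩ ω ∂μ) * (∫ ω,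 X ⟨0, by omega⟩ ω ∂μ) + 2 * (∫ ω, X ⟨0, by omega⟩ ω ∂μ) * (∫ ω, Y ⟨0, by omega⟩ ω ∂μ) * (∫ ω, Z ⟨0, by omega⟩ ω ∂μ) := by
  refine ⟨?_, by rw [hEX]; ring⟩
  have : Nonempty (Fin m) := ⟨⟨0, by omega⟩⟩
  have hXYZ := hX3.integrable_mul_mul_of_three hY3 hZ3
  have hXZY : Integrable (X ⟨0, by omega⟩ * Z ⟨0, by omega⟩ * Y ⟨0, by omega⟩) μ := by
    rwa [mul_right_comm]
  have hXY := hX3.integrable_mul_of_three hY3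
  have hXZ := hX3.integrable_mul_of_three hZ3
  have hY := hY3.integrable (by norm_num)
  have hZ := hZ3.integrable (by norm_num)
  have hS := integral_sampleMean_comp_of_identDistrib hident
    (g := fun p ↦ p.1 * p.2.1 * p.2.2) (by fun_prop) hXYZ
  have iS := integrable_sum_comp_of_identDistrib hident
    (g := fun p ↦ p.1 * p.2.1 * p.2.2) (by fun_prop) hXYZ
  have hSZ := integral_sampleMean_mul_sampleMean hindep hident (g := fun p ↦ p.1 * p.2.1)
    (h := fun p ↦ p.2.2) (by fun_prop) (by fun_prop) hXY hZ hXYZ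
  have iSZ := integrable_sampleMean_mul_sampleMean hindep hident (g := fun p ↦ p.1 * p.2.1)
    (h := fun p ↦ p.2.2) (by fun_prop) (by fun_prop) hXY hZ hXYZ
  have hSY := integral_sampleMean_mul_sampleMean hindep hident (g := fun p ↦ p.1 * p.2.2)
    (h := fun p ↦ p.2.1) (by fun_prop) (by fun_prop) hXZ hY hXZY
  have iSY := integrable_sampleMean_mul_sampleMean hindep hident (g := fun p ↦ p.1 * p.2.2)
    (h := fun p ↦ p.2.1) (by fun_prop) (by fun_prop) hXZ hY hXZY
  simp only [Fintype.card_fin, mul_right_comm _ (Z _ _) (Y _ _)] at hS hSZ hSY iS iSZ iSY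
  have hm0 : (m : ℝ) ≠ 0 := Nat.cast_ne_zero.mpr (by omega)
  have hm1 : (m : ℝ) - 1 ≠ 0 := sub_ne_zero.mpr (Nat.one_lt_cast.mpr hm).ne'
  rw [integral_div, integral_sub, integral_const_mul ((m : ℝ) + 1), integral_const_mul (m : ℝ),
    integral_add iSZ iSY, hS, hSZ, hSY]
  · field_simp
    ring
  exacts [(iS.const_mul _).const_mul _, (iSZ.add iSY).const_mul _]
end

section
/- Let m ≥ 1 and suppose 𝔼[X] = 0. Then the Gauss-optimal third-order estimator c₃⁽ᶜ'ᴳᵒ⁾ = ( (m+4)·\overline{X³} − 3m·\overline{X²}·X̄ ) / (m+1) (equivalently \overline{X³} − (3/(m(m+1)))·∑_{i≠j} Xᵢ²Xⱼ) is an unbiased estimator of the third cumulant: 𝔼[c₃⁽ᶜ'ᴳᵒ⁾] = 𝔼[X³]. -/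
/-!
Expanding `(∑ᵢ Xᵢ²)(∑ⱼ Xⱼ)`, every off-diagonal term `𝔼[Xᵢ² Xⱼ]` (i ≠ j) factors by
independence and vanishes because `𝔼[Xⱼ] = 0`, so `𝔼[(∑ᵢ Xᵢ²)(∑ⱼ Xⱼ)] = 𝔼[∑ᵢ Xᵢ³] = m 𝔼[X³]`.
The estimator is `((m + 4) ∑ᵢ Xᵢ³ - 3 (∑ᵢ Xᵢ²)(∑ⱼ Xⱼ)) / (m (m + 1))`, so its mean is
`((m + 4) - 3) m 𝔼[X³] / (m (m + 1)) = 𝔼[X³]`.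
-/

open MeasureTheory ProbabilityTheory

lemma MeasureTheory.MemLp.integrable_pow {α 𝕜 : Type*} [MeasurableSpace α] {μ : Measure α}
    [NormedDivisionRing 𝕜] {f : α → 𝕜} {n : ℕ} (hf : MemLp f n μ) (hn : n ≠ 0) :
    Integrable (fun x => f x ^ n) μ :=
  (integrable_norm_iff (hf.aestronglyMeasurable.pow n)).1 <| by
    simpa only [Pi.pow_apply, norm_pow] using hf.integrable_norm_pow hn

namespace ProbabilityTheory

variable {Ω : Type*} [MeasurableSpace Ω] {μ : Measure Ω}

lemma IndepFun.integral_sq_mul_eq_zero {X Y : Ω → ℝ} (hXY : IndepFun X Y μ)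
    (hX : AEStronglyMeasurable X μ) (hY : AEStronglyMeasurable Y μ) (hmean : μ[Y] = 0) :
    ∫ ω, X ω ^ 2 * Y ω ∂μ = 0 := by
  have hX2Y : IndepFun (fun ω => X ω ^ 2) Y μ :=
    hXY.comp (measurable_id.pow_const 2) measurable_id
  rw [hX2Y.integral_fun_mul_eq_mul_integral (hX.pow 2) hY, hmean, mul_zero]

variable [IsProbabilityMeasure μ] {ι : Type*} {X : ι → Ω → ℝ}

lemma iIndepFun.integrable_sq_mul (hindep : iIndepFun X μ) (hX : ∀ i, MemLp (X i) 3 μ)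
    (i j : ι) : Integrable (fun ω => X i ω ^ 2 * X j ω) μ := by
  rcases eq_or_ne i j with rfl | hij
  · simpa only [pow_succ] using (hX i).integrable_pow (n := 3) three_ne_zero
  · exact ((hindep.indepFun hij).comp (measurable_id.pow_const 2) measurable_id).integrable_mul
      ((hX i).mono_exponent (by norm_num)).integrable_sq
      ((hX j).integrable (by norm_num))

lemma iIndepFun.integrable_sum_sq_mul_sum [Fintype ι] (hindep : iIndepFun X μ)
    (hX : ∀ i, MemLp (X i) 3 μ) : Integrable (fun ω => (∑ i, X i ω ^ 2) * ∑ j, X j ω) μ := by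
  simp_rw [Finset.sum_mul_sum]
  exact integrable_finsetSum _ fun i _ => integrable_finsetSum _ fun j _ =>
    hindep.integrable_sq_mul hX i j

theorem iIndepFun.integral_sum_sq_mul_sum [Fintype ι] (hindep : iIndepFun X μ)
    (hX : ∀ i, MemLp (X i) 3 μ) (hmean : ∀ i, μ[X i] = 0) :
    ∫ ω, (∑ i, X i ω ^ 2) * ∑ j, X j ω ∂μ = ∑ i, ∫ ω, X i ω ^ 3 ∂μ := by
  simp_rw [Finset.sum_mul_sum]
  rw [integral_finsetSum _ fun i _ => integrable_finsetSum _ fun j _ =>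
    hindep.integrable_sq_mul hX i j]
  refine Finset.sum_congr rfl fun i _ => ?_
  rw [integral_finsetSum _ fun j _ => hindep.integrable_sq_mul hX i j,
    Finset.sum_eq_single_of_mem i (Finset.mem_univ i) fun j _ hji =>
      (hindep.indepFun hji.symm).integral_sq_mul_eq_zero (hX i).1 (hX j).1 (hmean j)]
  simp only [pow_succ]

end ProbabilityTheory

theorem unbiased_c3_Go {Ω : Type*} [MeasurableSpace Ω] (μ : Measure Ω) [IsProbabilityMeasure μ]
    (m : ℕ) (hm : 1 ≤ m)
    (X : Fin m → Ω → ℝ)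
    (hindep : iIndepFun X μ)
    (hident : ∀ i, IdentDistrib (X i) (X ⟨0, by omega⟩) μ μ)
    (hX : MemLp (X ⟨0, by omega⟩) 3 μ)
    (hEX : (∫ ω, X ⟨0, by omega⟩ ω ∂μ) = 0) :
    (∫ ω, (((m:ℝ)+4) * ((m:ℝ)⁻¹ * ∑ i, (X i ω)^3) - 3 * (m:ℝ) * ((m:ℝ)⁻¹ * ∑ i, (X i ω)^2) * ((m:ℝ)⁻¹ * ∑ i, X i ω)) / ((m:ℝ)+1) ∂μ) = (∫ ω, X ⟨0, by omega⟩ ω^3 ∂μ) := by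
  set M3 := ∫ ω, X ⟨0, by omega⟩ ω ^ 3 ∂μ
  have hLp i : MemLp (X i) 3 μ := (hident i).symm.memLp_snd hX
  have hmean i : μ[X i] = 0 := (hident i).integral_eq.trans hEX
  have hcube i : ∫ ω, X i ω ^ 3 ∂μ = M3 :=
    ((hident i).comp (measurable_id.pow_const 3)).integral_eq
  have hcube_int i : Integrable (fun ω => X i ω ^ 3) μ := (hLp i).integrable_pow three_ne_zero
  have hm0 : (m : ℝ) ≠ 0 := Nat.cast_ne_zero.2 (by omega)
  calc _ = ∫ ω, ((m + 4) * ∑ i, X i ω ^ 3 - 3 * ((∑ i, X i ω ^ 2) * ∑ j, X j ω))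
        / (m * (m + 1)) ∂μ := integral_congr_ae <| ae_of_all _ fun ω => by field_simp
    _ = ((m + 4) * (m * M3) - 3 * (m * M3)) / (m * (m + 1)) := by
      have hsum3 : ∑ i, ∫ ω, X i ω ^ 3 ∂μ = m * M3 := by simp [hcube]
      rw [integral_div, integral_sub ((integrable_finsetSum _ fun i _ => hcube_int i).const_mul _)
        ((hindep.integrable_sum_sq_mul_sum hLp).const_mul _), integral_const_mul,
        integral_const_mul, hindep.integral_sum_sq_mul_sum hLp hmean,
        integral_finsetSum _ fun i _ => hcube_int i, hsum3]
    _ = M3 := by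
      field_simp
      ring
end

section
/- Let m ≥ 1 and let X₁, …, Xₘ, Z₁, …, Zₘ be 2m mutually independent Gaussian random variables, each Xᵢ with law gaussianReal 0 vₓ and each Zᵢ with law gaussianReal 0 v_z. Then the Gauss-optimal estimator c₃⁽ʰ'ᴳᵒ⁾ = ( (m+2)·\overline{X²Z} − m·\overline{X²}·Z̄ ) / (m+1) has variance Var(c₃⁽ʰ'ᴳᵒ⁾) = 2(m+2)·vₓ²·v_z / (m(m+1)). -/
/-!
Write the estimator as `∑ᵢ Wᵢ Zᵢ` with `Wᵢ = ((m+2) Xᵢ² - ∑ⱼ Xⱼ²) / (m(m+1))`, a function of `X`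
alone. As `X` is independent of the centred, uncorrelated `Zᵢ`, its variance is `v_z ∑ᵢ E[Wᵢ²]`,
and `E[Wᵢ²]` follows from `E[Xⱼ² Xₗ²] = vₓ² (1 + 2 δⱼₗ)`. The Gaussian moments are read off the
moment generating function `exp (v t² / 2)`, whose `n`-th derivative is a polynomial times itself.
-/

open MeasureTheory ProbabilityTheory Real Polynomial
open scoped NNReal

namespace ProbabilityTheory

noncomputable def gaussianMomentPoly (v : ℝ) : ℕ → ℝ[X]
  | 0 => 1
  | n + 1 => derivative (gaussianMomentPoly v n) + C v * X * gaussianMomentPoly v n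

lemma iteratedDeriv_exp_mul_sq_div_two (v : ℝ) (n : ℕ) :
    iteratedDeriv n (fun t => rexp (v * t ^ 2 / 2))
      = fun t => (gaussianMomentPoly v n).eval t * rexp (v * t ^ 2 / 2) := by
  induction n with
  | zero => simp [gaussianMomentPoly]
  | succ n ih =>
    rw [iteratedDeriv_succ, ih]
    ext t
    have hexp : HasDerivAt (fun t => rexp (v * t ^ 2 / 2)) (rexp (v * t ^ 2 / 2) * (v * t)) t := by
      convert (((hasDerivAt_pow 2 t).const_mul v).div_const 2).exp using 1
      push_cast
      ring
    refine (((gaussianMomentPoly v n).hasDerivAt t).mul hexp).deriv.trans ?_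
    simp only [gaussianMomentPoly, eval_add, eval_mul, eval_C, eval_X]
    ring

lemma integral_pow_gaussianReal (v : ℝ≥0) (n : ℕ) :
    ∫ x, x ^ n ∂gaussianReal 0 v = (gaussianMomentPoly v n).eval 0 := by
  calc ∫ x, x ^ n ∂gaussianReal 0 v = iteratedDeriv n (mgf (fun x ↦ x) (gaussianReal 0 v)) 0 := by
        rw [iteratedDeriv_mgf_zero] <;> simp
    _ = _ := by simp [mgf_fun_id_gaussianReal, iteratedDeriv_exp_mul_sq_div_two]

section HasLaw

variable {Ω : Type*} [MeasurableSpace Ω] {μ : Measure Ω}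

lemma hasLaw_of_map_eq {𝓧 : Type*} [MeasurableSpace 𝓧] {P : Measure 𝓧} [IsProbabilityMeasure P]
    {Y : Ω → 𝓧} (h : μ.map Y = P) : HasLaw Y P μ :=
  ⟨.of_map_ne_zero (h ▸ IsProbabilityMeasure.ne_zero P), h⟩

variable {Y : Ω → ℝ} {v : ℝ≥0}

lemma HasLaw.integral_pow_gaussianReal (hY : HasLaw Y (gaussianReal 0 v) μ) (n : ℕ) :
    ∫ ω, Y ω ^ n ∂μ = (gaussianMomentPoly v n).eval 0 :=
  (hY.integral_comp (f := fun x => x ^ n) (by fun_prop)).trans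
    (ProbabilityTheory.integral_pow_gaussianReal v n)

lemma HasLaw.integrable_pow_gaussianReal (hY : HasLaw Y (gaussianReal 0 v) μ) (n : ℕ) :
    Integrable (fun ω => Y ω ^ n) μ := by
  have h : Integrable (fun x : ℝ => x ^ n) (gaussianReal 0 v) :=
    integrable_pow_of_mem_interior_integrableExpSet (X := id) (by simp) n
  rw [← hY.map_eq] at h
  exact (integrable_map_measure (continuous_pow n).aestronglyMeasurable hY.aemeasurable).1 h

lemma HasLaw.memLp_pow_gaussianReal (hY : HasLaw Y (gaussianReal 0 v) μ) (n : ℕ) :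
    MemLp (fun ω => Y ω ^ n) 2 μ := by
  refine (memLp_two_iff_integrable_sq (hY.aemeasurable.pow_const n).aestronglyMeasurable).2 ?_
  simpa only [← pow_mul] using hY.integrable_pow_gaussianReal (n * 2)

end HasLaw

section Independence

variable {Ω ι : Type*} [MeasurableSpace Ω] {μ : Measure Ω}

lemma iIndepFun.indepFun_sumElim {κ β : Type*} [Fintype ι] [Fintype κ] [MeasurableSpace β]
    {X : ι → Ω → β} {Z : κ → Ω → β} (h : iIndepFun (Sum.elim X Z) μ)
    (hX : ∀ i, AEMeasurable (X i) μ) (hZ : ∀ k, AEMeasurable (Z k) μ) :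
    IndepFun (fun ω i => X i ω) (fun ω k => Z k ω) μ := by
  have hblocks := h.indepFun_finset₀ (Finset.univ.map .inl) (Finset.univ.map .inr)
    (by simp [Finset.disjoint_left]) (Sum.rec hX hZ)
  exact hblocks.comp (φ := fun x i => x ⟨.inl i, by simp⟩) (ψ := fun x k => x ⟨.inr k, by simp⟩)
    (measurable_pi_lambda _ fun _ => measurable_pi_apply _)
    (measurable_pi_lambda _ fun _ => measurable_pi_apply _)

variable {X : ι → Ω → ℝ} {v : ℝ≥0}

lemma integral_pow_mul_pow_of_iIndepFun (hind : iIndepFun X μ)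
    (hX : ∀ i, AEMeasurable (X i) μ) {i j : ι} (hij : i ≠ j) (p q : ℕ) :
    ∫ ω, X i ω ^ p * X j ω ^ q ∂μ = (∫ ω, X i ω ^ p ∂μ) * ∫ ω, X j ω ^ q ∂μ :=
  (hind.indepFun hij).integral_fun_comp_mul_comp (f := fun x => x ^ p) (g := fun x => x ^ q)
    (hX i) (hX j) (continuous_pow p).aestronglyMeasurable (continuous_pow q).aestronglyMeasurable

variable [DecidableEq ι] (hX : ∀ i, HasLaw (X i) (gaussianReal 0 v) μ) (hind : iIndepFun X μ)
include hX hind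

lemma integral_mul_of_iIndepFun_gaussianReal (i j : ι) :
    ∫ ω, X i ω * X j ω ∂μ = if i = j then (v : ℝ) else 0 := by
  by_cases hij : i = j
  · subst hij
    simpa [← sq, gaussianMomentPoly] using (hX i).integral_pow_gaussianReal 2
  · have h := integral_pow_mul_pow_of_iIndepFun hind (fun k => (hX k).aemeasurable) hij 1 1
    have hmean := (hX i).integral_pow_gaussianReal 1
    simp only [pow_one] at h hmean
    simp [h, hmean, hij, gaussianMomentPoly]

lemma integral_sq_mul_sq_of_iIndepFun_gaussianReal (i j : ι) :
    ∫ ω, X i ω ^ 2 * X j ω ^ 2 ∂μ = (v : ℝ) ^ 2 + if i = j then 2 * (v : ℝ) ^ 2 else 0 := by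
  by_cases hij : i = j
  · subst hij
    simp only [← pow_add, (hX i).integral_pow_gaussianReal]
    simp [gaussianMomentPoly]
    ring
  · rw [integral_pow_mul_pow_of_iIndepFun hind (fun k => (hX k).aemeasurable) hij,
      (hX i).integral_pow_gaussianReal, (hX j).integral_pow_gaussianReal]
    simp [gaussianMomentPoly, hij]
    ring

end Independence

section SecondMoments

variable {Ω ι : Type*} [Fintype ι] [MeasurableSpace Ω] {μ : Measure Ω}

lemma integral_sq_sum {Y : ι → Ω → ℝ} (hY : ∀ i, MemLp (Y i) 2 μ) :
    ∫ ω, (∑ i, Y i ω) ^ 2 ∂μ = ∑ i, ∑ j, ∫ ω, Y i ω * Y j ω ∂μ := by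
  have hprod : ∀ i j, Integrable (fun ω => Y i ω * Y j ω) μ :=
    fun i j => (hY i).integrable_mul (hY j)
  simp only [sq, Finset.sum_mul_sum]
  rw [integral_finsetSum _ fun i _ => integrable_finsetSum _ fun j _ => hprod i j]
  exact Finset.sum_congr rfl fun i _ => integral_finsetSum _ fun j _ => hprod i j

lemma integral_sq_sum_mul_of_integral_mul_eq [DecidableEq ι] {Y : ι → Ω → ℝ} {c d : ℝ}
    (a : ι → ℝ) (hY : ∀ i, MemLp (Y i) 2 μ)
    (hmoment : ∀ i j, ∫ ω, Y i ω * Y j ω ∂μ = c + if i = j then d else 0) :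
    ∫ ω, (∑ i, a i * Y i ω) ^ 2 ∂μ = c * (∑ i, a i) ^ 2 + d * ∑ i, a i ^ 2 := by
  rw [integral_sq_sum fun i => (hY i).const_mul (a i)]
  have hterm : ∀ i j, ∫ ω, a i * Y i ω * (a j * Y j ω) ∂μ
      = c * (a i * a j) + if i = j then d * a i ^ 2 else 0 := by
    intro i j
    rw [show (fun ω => a i * Y i ω * (a j * Y j ω)) = fun ω => a i * a j * (Y i ω * Y j ω) by
      ext; ring, integral_const_mul, hmoment]
    split_ifs with hij
    · subst hij; ring
    · ring
  simp only [hterm, Finset.sum_add_distrib, Finset.sum_ite_eq, Finset.mem_univ, if_true,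
    ← Finset.mul_sum, sq (∑ i, a i), Finset.sum_mul_sum]

variable {α : Type*} [DecidableEq ι] [MeasurableSpace α] [IsProbabilityMeasure μ]

lemma variance_sum_mul_of_indepFun {ξ : Ω → α} {ζ : Ω → ι → ℝ} {f : ι → α → ℝ} {v : ℝ}
    (hξζ : IndepFun ξ ζ μ) (hξ : AEMeasurable ξ μ) (hζ : AEMeasurable ζ μ)
    (hf : ∀ i, Measurable (f i)) (hfξ : ∀ i, MemLp (fun ω => f i (ξ ω)) 2 μ)
    (hζ2 : ∀ i, MemLp (fun ω => ζ ω i) 2 μ) (hmean : ∀ i, ∫ ω, ζ ω i ∂μ = 0)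
    (hcov : ∀ i k, ∫ ω, ζ ω i * ζ ω k ∂μ = if i = k then v else 0) :
    Var[fun ω => ∑ i, f i (ξ ω) * ζ ω i; μ] = v * ∑ i, ∫ ω, f i (ξ ω) ^ 2 ∂μ := by
  have hfactor : ∀ (F : α → ℝ) (G : (ι → ℝ) → ℝ), Measurable F → Measurable G →
      ∫ ω, F (ξ ω) * G (ζ ω) ∂μ = (∫ ω, F (ξ ω) ∂μ) * ∫ ω, G (ζ ω) ∂μ :=
    fun F G hF hG => hξζ.integral_fun_comp_mul_comp hξ hζ hF.aestronglyMeasurable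
      hG.aestronglyMeasurable
  have hintegrable : ∀ (F : α → ℝ) (G : (ι → ℝ) → ℝ), Measurable F → Measurable G →
      Integrable (fun ω => F (ξ ω)) μ → Integrable (fun ω => G (ζ ω)) μ →
      Integrable (fun ω => F (ξ ω) * G (ζ ω)) μ :=
    fun F G hF hG hFi hGi => (hξζ.comp hF hG).integrable_mul hFi hGi
  have hterm : ∀ i, Integrable (fun ω => f i (ξ ω) * ζ ω i) μ := fun i =>
    hintegrable _ (fun z => z i) (hf i) (measurable_pi_apply i)
      ((hfξ i).integrable one_le_two) ((hζ2 i).integrable one_le_two)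
  have hmean_zero : ∫ ω, ∑ i, f i (ξ ω) * ζ ω i ∂μ = 0 := by
    rw [integral_finsetSum _ fun i _ => hterm i]
    refine Finset.sum_eq_zero fun i _ => ?_
    rw [hfactor _ (fun z => z i) (hf i) (measurable_pi_apply i), hmean, mul_zero]
  have hterm2 : ∀ i, MemLp (fun ω => f i (ξ ω) * ζ ω i) 2 μ := by
    intro i
    refine (memLp_two_iff_integrable_sq (hterm i).aestronglyMeasurable).2 ?_
    simpa only [mul_pow] using hintegrable _ (fun z => z i ^ 2) ((hf i).pow_const 2)
      ((measurable_pi_apply i).pow_const 2) ((hfξ i).integrable_sq) ((hζ2 i).integrable_sq)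
  have hcross : ∀ i k, ∫ ω, f i (ξ ω) * ζ ω i * (f k (ξ ω) * ζ ω k) ∂μ
      = if i = k then v * ∫ ω, f i (ξ ω) ^ 2 ∂μ else 0 := by
    intro i k
    rw [show (fun ω => f i (ξ ω) * ζ ω i * (f k (ξ ω) * ζ ω k))
        = fun ω => f i (ξ ω) * f k (ξ ω) * (ζ ω i * ζ ω k) by ext; ring,
      hfactor (fun x => f i x * f k x) (fun z => z i * z k) ((hf i).mul (hf k))
        ((measurable_pi_apply i).mul (measurable_pi_apply k)), hcov]
    split_ifs with hik
    · subst hik; simp only [← sq]; ring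
    · ring
  rw [variance_eq_integral (Finset.aemeasurable_fun_sum _ fun i _ => (hterm i).aemeasurable),
    hmean_zero]
  simp only [sub_zero]
  rw [integral_sq_sum hterm2]
  simp [hcross, Finset.mul_sum]

end SecondMoments

end ProbabilityTheory

section Estimator

variable {m : ℕ}

noncomputable def c3Weight (m : ℕ) (i j : Fin m) : ℝ :=
  ((m : ℝ) * (m + 1))⁻¹ * ((m + 2) * (if i = j then 1 else 0) - 1)

lemma sum_c3Weight (i : Fin m) : ∑ j, c3Weight m i j = 2 * ((m : ℝ) * (m + 1))⁻¹ := by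
  simp [c3Weight, ← Finset.mul_sum, Finset.sum_sub_distrib]
  ring

lemma sum_c3Weight_sq (i : Fin m) :
    ∑ j, c3Weight m i j ^ 2 = ((m : ℝ) * (m + 1))⁻¹ ^ 2 * (m * (m + 3)) := by
  simp [c3Weight, mul_pow, ← Finset.mul_sum, sub_sq, Finset.sum_add_distrib,
    Finset.sum_sub_distrib, ite_pow, -mul_eq_mul_left_iff]
  ring

lemma c3_estimator_eq_sum_c3Weight (x z : Fin m → ℝ) :
    (((m:ℝ)+2) * ((m:ℝ)⁻¹ * ∑ i, x i ^ 2 * z i)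
      - (m:ℝ) * ((m:ℝ)⁻¹ * ∑ i, x i ^ 2) * ((m:ℝ)⁻¹ * ∑ i, z i)) / ((m:ℝ)+1)
      = ∑ i, (∑ j, c3Weight m i j * x j ^ 2) * z i := by
  have hexpand : ∑ i, (∑ j, c3Weight m i j * x j ^ 2) * z i
      = ((m : ℝ) * (m + 1))⁻¹ * ((m + 2) * ∑ i, x i ^ 2 * z i - (∑ i, x i ^ 2) * ∑ i, z i) := by
    simp [c3Weight, Finset.sum_mul, Finset.mul_sum, sub_mul, mul_sub, Finset.sum_sub_distrib,
      mul_assoc]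
  rw [hexpand]
  rcases eq_or_ne (m : ℝ) 0 with hm | hm
  · simp [hm]
  · field_simp

end Estimator

theorem variance_c3_h_Go_gaussian_general {Ω : Type*} [MeasurableSpace Ω]
    (μ : Measure Ω) [IsProbabilityMeasure μ]
    (m : ℕ) (vx vz : NNReal)
    (X Z : Fin m → Ω → ℝ)
    (hindep : iIndepFun (Sum.elim X Z) μ)
    (hlawX : ∀ i, Measure.map (X i) μ = gaussianReal 0 vx)
    (hlawZ : ∀ i, Measure.map (Z i) μ = gaussianReal 0 vz) :
    variance (fun ω => (((m:ℝ)+2) * ((m:ℝ)⁻¹ * ∑ i, (X i ω)^2 * Z i ω) - (m:ℝ) * ((m:ℝ)⁻¹ * ∑ i, (X i ω)^2) * ((m:ℝ)⁻¹ * ∑ i, Z i ω)) / ((m:ℝ)+1)) μ = 2 * ((m:ℝ)+2) * (vx:ℝ)^2 * (vz:ℝ) / ((m:ℝ) * ((m:ℝ)+1)) := by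
  have hX i : HasLaw (X i) (gaussianReal 0 vx) μ := hasLaw_of_map_eq (hlawX i)
  have hZ i : HasLaw (Z i) (gaussianReal 0 vz) μ := hasLaw_of_map_eq (hlawZ i)
  have hXind : iIndepFun X μ := hindep.precomp (f := Sum.elim X Z) Sum.inl_injective
  have hZind : iIndepFun Z μ := hindep.precomp (f := Sum.elim X Z) Sum.inr_injective
  simp_rw [c3_estimator_eq_sum_c3Weight (fun i => X i _) (fun i => Z i _)]
  refine (variance_sum_mul_of_indepFun (ξ := fun ω k => X k ω) (ζ := fun ω k => Z k ω)
    (f := fun i x => ∑ j, c3Weight m i j * x j ^ 2)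
    (hindep.indepFun_sumElim (fun i => (hX i).aemeasurable) (fun i => (hZ i).aemeasurable))
    (aemeasurable_pi_lambda _ fun k => (hX k).aemeasurable)
    (aemeasurable_pi_lambda _ fun k => (hZ k).aemeasurable) (fun i => by fun_prop)
    (fun i => memLp_finsetSum _ fun j _ => ((hX j).memLp_pow_gaussianReal 2).const_mul _)
    (fun i => by simpa using (hZ i).memLp_pow_gaussianReal 1)
    (fun i => by simpa [gaussianMomentPoly] using (hZ i).integral_pow_gaussianReal 1)
    (integral_mul_of_iIndepFun_gaussianReal hZ hZind)).trans ?_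
  simp only [integral_sq_sum_mul_of_integral_mul_eq _ (fun j => (hX j).memLp_pow_gaussianReal 2)
    (integral_sq_mul_sq_of_iIndepFun_gaussianReal hX hXind), sum_c3Weight, sum_c3Weight_sq,
    Finset.sum_const, Finset.card_univ, Fintype.card_fin, nsmul_eq_mul]
  rcases eq_or_ne (m : ℝ) 0 with hm | hm
  · simp [hm]
  · field_simp
    ring

theorem variance_c3_h_Go_gaussian {Ω : Type*} [MeasurableSpace Ω]
    (μ : Measure Ω) [IsProbabilityMeasure μ]
    (m : ℕ) (hm : 1 ≤ m) (vx vz : NNReal)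
    (X Z : Fin m → Ω → ℝ)
    (hXmeas : ∀ i, Measurable (X i))
    (hZmeas : ∀ i, Measurable (Z i))
    (hindep : iIndepFun (Sum.elim X Z) μ)
    (hlawX : ∀ i, Measure.map (X i) μ = gaussianReal 0 vx)
    (hlawZ : ∀ i, Measure.map (Z i) μ = gaussianReal 0 vz) :
    variance (fun ω => (((m:ℝ)+2) * ((m:ℝ)⁻¹ * ∑ i, (X i ω)^2 * Z i ω) - (m:ℝ) * ((m:ℝ)⁻¹ * ∑ i, (X i ω)^2) * ((m:ℝ)⁻¹ * ∑ i, Z i ω)) / ((m:ℝ)+1)) μ = 2 * ((m:ℝ)+2) * (vx:ℝ)^2 * (vz:ℝ) / ((m:ℝ) * ((m:ℝ)+1)) :=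
  variance_c3_h_Go_gaussian_general μ m vx vz X Z hindep hlawX hlawZ
end
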